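/- Let (X, 𝓕, m) be a probability space, T an m-nonsingular transformation whose Perron–Frobenius operator 𝓛_T is asymptotically periodic with data s, r(i), g_{i,j}, λ_{i,j}; set g_i = (1/r(i)) Σ_{j=1}^{r(i)} g_{i,j} and A_i = {g_i > 0}. Let A ∈ 𝓕 with m(A) > 0 and A ⊆ T⁻¹(A). Then for every i ∈ {1,…,s}, either m(A_i ∩ A) = 0 or m(A_i \ A) = 0; moreover m(A ∩ ⋃_{i=1}^{s} A_i) > 0. -/

import Mathlib

/-!
Let `N` be a common multiple of the periods `r i`. Then `𝓛^N` fixes every `g i j`, and for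
integrable `f` the iterates `𝓛^{kN} f` converge in `L¹` to `h_f = ∑ λ_{i,j}(f) g_{i,j}`.
Since `T⁻¹(Aᶜ) ⊆ Aᶜ`, the iterates of a nonnegative function vanishing off `A` vanish off `A`.

For `f = 1_A` the iterates keep mass `m(A) > 0` on `A`, so `h_f` charges `A` and some `A_i`
meets `A`. If `A_i` meets `A`, some `g i j` has positive mass on `A`; the iterates of
`f = 1_A g_{i,j}` lie between `0` and `g i j` and vanish off `A`, so `h_f` is a positive multiple
of `g i j` vanishing off `A`. Hence `g i j`, and with it its whole cycle, vanishes off `A`.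
-/

open MeasureTheory Filter Topology

noncomputable section

/-- `L` is the Perron–Frobenius operator of the `μ`-nonsingular transformation `T`:
for every integrable `f`, `L f` is integrable and `∫_A L f dμ = ∫_{T⁻¹ A} f dμ`
for every measurable set `A`. -/
def IsPF {α : Type*} [MeasurableSpace α] (μ : Measure α) (T : α → α)
    (L : (α → ℝ) → α → ℝ) : Prop :=
  ∀ f : α → ℝ, Integrable f μ →
    Integrable (L f) μ ∧
      ∀ A : Set α, MeasurableSet A → ∫ x in A, L f x ∂μ = ∫ x in T ⁻¹' A, f x ∂μ

/-- Asymptotic periodicity of an operator `L` on `L¹(μ)` with data `s`, `r i`,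
probability densities `g i j` and bounded linear functionals `Λ i j`. -/
def AsympPeriodic {α : Type*} [MeasurableSpace α] (μ : Measure α)
    (L : (α → ℝ) → α → ℝ) (s : ℕ) (r : ℕ → ℕ) (g : ℕ → ℕ → α → ℝ)
    (Λ : ℕ → ℕ → (α →₁[μ] ℝ) →L[ℝ] ℝ) : Prop :=
  1 ≤ s ∧ (∀ i ∈ Finset.Icc 1 s, 1 ≤ r i) ∧
    (∀ i ∈ Finset.Icc 1 s, ∀ j ∈ Finset.Icc 1 (r i),
      Measurable (g i j) ∧ Integrable (g i j) μ ∧ 0 ≤ᵐ[μ] g i j ∧ ∫ x, g i j x ∂μ = 1) ∧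
    (∀ i ∈ Finset.Icc 1 s, ∀ j ∈ Finset.Icc 1 (r i), ∀ k ∈ Finset.Icc 1 s,
      ∀ l ∈ Finset.Icc 1 (r k), (i, j) ≠ (k, l) →
        (fun x => g i j x * g k l x) =ᵐ[μ] 0) ∧
    (∀ i ∈ Finset.Icc 1 s,
      (∀ j ∈ Finset.Icc 1 (r i - 1), L (g i j) =ᵐ[μ] g i (j + 1)) ∧
        L (g i (r i)) =ᵐ[μ] g i 1) ∧
    ∀ (f : α → ℝ) (hf : Integrable f μ),
      Tendsto (fun n => ∫ x, |(L^[n] (fun x => f x -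
          ∑ i ∈ Finset.Icc 1 s, ∑ j ∈ Finset.Icc 1 (r i), Λ i j (hf.toL1 f) * g i j x)) x| ∂μ)
        atTop (𝓝 0)

/-- The averaged density `(1/r) ∑_{j=1}^{r} g j`. -/
def avgDens {α : Type*} (r : ℕ) (g : ℕ → α → ℝ) : α → ℝ :=
  fun x => (r : ℝ)⁻¹ * ∑ j ∈ Finset.Icc 1 r, g j x

open Finset

theorem avgDens_pos {α : Type*} {r j : ℕ} {g : ℕ → α → ℝ} {x : α}
    (hg0 : ∀ l ∈ Icc 1 r, 0 ≤ g l x) (hj : j ∈ Icc 1 r) (hpos : 0 < g j x) : 0 < avgDens r g x := by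
  have hr : (0 : ℝ) < r := by exact_mod_cast (mem_Icc.1 hj).1.trans (mem_Icc.1 hj).2
  exact mul_pos (inv_pos.2 hr) (sum_pos' hg0 ⟨j, hj, hpos⟩)

def linComb {α : Type*} (s : ℕ) (r : ℕ → ℕ) (g : ℕ → ℕ → α → ℝ) (c : ℕ → ℕ → ℝ) (x : α) : ℝ :=
  ∑ i ∈ Icc 1 s, ∑ j ∈ Icc 1 (r i), c i j * g i j x

section

variable {X : Type*} [MeasurableSpace X] {μ : Measure X} {T : X → X} {L : (X → ℝ) → X → ℝ}

theorem ae_imp_eq_zero_of_setIntegral_eq_zero {f : X → ℝ} {B : Set X} (hf : Integrable f μ)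
    (hf0 : 0 ≤ᵐ[μ] f) (h : ∫ x in B, f x ∂μ = 0) : ∀ᵐ x ∂μ, x ∈ B → f x = 0 :=
  ae_imp_of_ae_restrict
    ((setIntegral_eq_zero_iff_of_nonneg_ae (ae_restrict_of_ae hf0) hf.integrableOn).1 h)

theorem tendsto_setIntegral_of_tendsto_integral_abs_sub {ι : Type*} {l : Filter ι}
    {u : ι → X → ℝ} {h : X → ℝ} (hh : Integrable h μ) (hu : ∀ k, Integrable (u k) μ)
    (htend : Tendsto (fun k => ∫ x, |u k x - h x| ∂μ) l (𝓝 0)) (B : Set X) :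
    Tendsto (fun k => ∫ x in B, u k x ∂μ) l (𝓝 (∫ x in B, h x ∂μ)) := by
  refine tendsto_setIntegral_of_L1 h hh.aestronglyMeasurable (Eventually.of_forall hu) ?_ B
  have := (ENNReal.continuous_ofReal.tendsto 0).comp htend
  rw [ENNReal.ofReal_zero] at this
  refine this.congr fun k => ?_
  simp only [Function.comp_apply, ← Real.norm_eq_abs]
  exact ofReal_integral_norm_eq_lintegral_enorm ((hu k).sub hh)

theorem measure_avgDens_pos_inter_eq_zero {r : ℕ} {g : ℕ → X → ℝ} {B : Set X}
    (hg : ∀ j ∈ Icc 1 r, Integrable (g j) μ) (hg0 : ∀ j ∈ Icc 1 r, 0 ≤ᵐ[μ] g j)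
    (hB : ∀ j ∈ Icc 1 r, ∫ x in B, g j x ∂μ = 0) :
    μ ({x | 0 < avgDens r g x} ∩ B) = 0 := by
  have hzero : ∀ᵐ x ∂μ, ∀ j ∈ Icc 1 r, x ∈ B → g j x = 0 := (eventually_all_finset _).2
    fun j hj => ae_imp_eq_zero_of_setIntegral_eq_zero (hg j hj) (hg0 j hj) (hB j hj)
  refine measure_eq_zero_iff_ae_notMem.2 (hzero.mono fun x hx hxB => ?_)
  have : avgDens r g x = 0 := by
    simp only [avgDens, sum_eq_zero fun j hj => hx j hj hxB.2, mul_zero]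
  exact hxB.1.ne' this

namespace IsPF

variable {f g : X → ℝ}

theorem integrable (hL : IsPF μ T L) (hf : Integrable f μ) : Integrable (L f) μ :=
  (hL f hf).1

theorem setIntegral_eq (hL : IsPF μ T L) (hf : Integrable f μ) {A : Set X}
    (hA : MeasurableSet A) : ∫ x in A, L f x ∂μ = ∫ x in T ⁻¹' A, f x ∂μ :=
  (hL f hf).2 A hA

theorem integral_eq (hL : IsPF μ T L) (hf : Integrable f μ) :
    ∫ x, L f x ∂μ = ∫ x, f x ∂μ := by
  simpa using hL.setIntegral_eq hf MeasurableSet.univ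

theorem congr_ae (hL : IsPF μ T L) (hf : Integrable f μ) (hg : Integrable g μ)
    (hfg : f =ᵐ[μ] g) : L f =ᵐ[μ] L g :=
  (hL.integrable hf).ae_eq_of_forall_setIntegral_eq _ _ (hL.integrable hg) fun A hA _ => by
    rw [hL.setIntegral_eq hf hA, hL.setIntegral_eq hg hA]
    exact integral_congr_ae (ae_restrict_of_ae hfg)

theorem sub (hL : IsPF μ T L) (hf : Integrable f μ) (hg : Integrable g μ) :
    L (f - g) =ᵐ[μ] L f - L g :=
  (hL.integrable (hf.sub hg)).ae_eq_of_forall_setIntegral_eq _ _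
      ((hL.integrable hf).sub (hL.integrable hg)) fun A hA _ => by
    simp only [Pi.sub_apply]
    rw [hL.setIntegral_eq (hf.sub hg) hA, integral_sub (hL.integrable hf).integrableOn
      (hL.integrable hg).integrableOn, hL.setIntegral_eq hf hA, hL.setIntegral_eq hg hA]
    exact integral_sub hf.integrableOn hg.integrableOn

theorem nonneg (hL : IsPF μ T L) (hf : Integrable f μ) (hf0 : 0 ≤ᵐ[μ] f) : 0 ≤ᵐ[μ] L f :=
  ae_nonneg_of_forall_setIntegral_nonneg (hL.integrable hf) fun A hA _ => by
    rw [hL.setIntegral_eq hf hA]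
    exact setIntegral_nonneg_of_ae hf0

theorem le_of_le_of_ae_eq_self (hL : IsPF μ T L) (hf : Integrable f μ) (hg : Integrable g μ)
    (hfg : f ≤ᵐ[μ] g) (hgfix : L g =ᵐ[μ] g) : L f ≤ᵐ[μ] g := by
  have hsub := hL.nonneg (hg.sub hf) (hfg.mono fun x hx => sub_nonneg.2 hx)
  filter_upwards [hsub, hL.sub hg hf, hgfix] with x h1 h2 h3
  simp only [Pi.zero_apply, h2, Pi.sub_apply, h3] at h1
  linarith

theorem ae_eq_self_of_setIntegral_preimage (hL : IsPF μ T L) (hf : Integrable f μ)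
    (h : ∀ A, MeasurableSet A → ∫ x in T ⁻¹' A, f x ∂μ = ∫ x in A, f x ∂μ) : L f =ᵐ[μ] f :=
  (hL.integrable hf).ae_eq_of_forall_setIntegral_eq _ _ hf fun A hA _ => by
    rw [hL.setIntegral_eq hf hA, h A hA]

theorem setIntegral_preimage_of_ae_eq_self (hL : IsPF μ T L) (hf : Integrable f μ)
    (hfix : L f =ᵐ[μ] f) {A : Set X} (hA : MeasurableSet A) :
    ∫ x in T ⁻¹' A, f x ∂μ = ∫ x in A, f x ∂μ := by
  rw [← hL.setIntegral_eq hf hA]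
  exact integral_congr_ae (ae_restrict_of_ae hfix)

theorem const_mul_ae_eq_self (hL : IsPF μ T L) (hf : Integrable f μ) (hfix : L f =ᵐ[μ] f)
    (c : ℝ) : L (fun x => c * f x) =ᵐ[μ] fun x => c * f x :=
  hL.ae_eq_self_of_setIntegral_preimage (hf.const_mul c) fun A hA => by
    rw [integral_const_mul, integral_const_mul, hL.setIntegral_preimage_of_ae_eq_self hf hfix hA]

theorem sum_ae_eq_self {ι : Type*} {s : Finset ι} {F : ι → X → ℝ} (hL : IsPF μ T L)
    (hF : ∀ i ∈ s, Integrable (F i) μ) (hfix : ∀ i ∈ s, L (F i) =ᵐ[μ] F i) :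
    L (fun x => ∑ i ∈ s, F i x) =ᵐ[μ] fun x => ∑ i ∈ s, F i x :=
  hL.ae_eq_self_of_setIntegral_preimage (integrable_finsetSum _ hF) fun A hA => by
    rw [integral_finsetSum _ fun i hi => (hF i hi).integrableOn,
      integral_finsetSum _ fun i hi => (hF i hi).integrableOn]
    exact sum_congr rfl fun i hi => hL.setIntegral_preimage_of_ae_eq_self (hF i hi) (hfix i hi) hA

theorem iterate (hL : IsPF μ T L) (hT : Measurable T) (n : ℕ) : IsPF μ T^[n] L^[n] := by
  induction n with
  | zero => exact fun f hf => ⟨hf, fun A _ => rfl⟩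
  | succ n ih =>
    intro f hf
    rw [Function.iterate_succ', Function.iterate_succ']
    refine ⟨hL.integrable (ih f hf).1, fun A hA => ?_⟩
    rw [Function.comp_apply, hL.setIntegral_eq (ih f hf).1 hA, (ih f hf).2 _ (hT hA),
      Set.preimage_comp]

theorem setIntegral_compl_eq_zero (hL : IsPF μ T L) {A : Set X} (hA : MeasurableSet A)
    (hAT : A ⊆ T ⁻¹' A) (hf : Integrable f μ) (hf0 : 0 ≤ᵐ[μ] f)
    (hfA : ∫ x in Aᶜ, f x ∂μ = 0) : ∫ x in Aᶜ, L f x ∂μ = 0 := by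
  rw [hL.setIntegral_eq hf hA.compl]
  refine le_antisymm ?_ (setIntegral_nonneg_of_ae hf0)
  calc ∫ x in T ⁻¹' Aᶜ, f x ∂μ ≤ ∫ x in Aᶜ, f x ∂μ :=
        setIntegral_mono_set hf.integrableOn (ae_restrict_of_ae hf0)
          (Set.compl_subset_compl.2 hAT).eventuallyLE
    _ = 0 := hfA

theorem iterate_mul_ae_eq_self (hL : IsPF μ T L) (hT : Measurable T) (hf : Integrable f μ)
    {p : ℕ} (hper : L^[p] f =ᵐ[μ] f) (q : ℕ) : L^[p * q] f =ᵐ[μ] f := by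
  induction q with
  | zero => rfl
  | succ q ih =>
    rw [Nat.mul_succ, Function.iterate_add_apply]
    exact ((hL.iterate hT (p * q)).congr_ae ((hL.iterate hT p).integrable hf) hf hper).trans ih

end IsPF

section Cycle

variable {r : ℕ} {g : ℕ → X → ℝ}

theorem iterate_sub_one_ae_eq_of_cycle (hL : IsPF μ T L) (hT : Measurable T)
    (hg : ∀ j ∈ Icc 1 r, Integrable (g j) μ)
    (hstep : ∀ j ∈ Icc 1 (r - 1), L (g j) =ᵐ[μ] g (j + 1)) {j : ℕ} (hj : j ∈ Icc 1 r) :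
    L^[j - 1] (g 1) =ᵐ[μ] g j := by
  obtain ⟨hj1, hjr⟩ := mem_Icc.1 hj
  induction j, hj1 using Nat.le_induction with
  | base => rfl
  | succ j hj1 ih =>
    have hj : j ∈ Icc 1 r := mem_Icc.2 ⟨hj1, by omega⟩
    rw [Nat.add_sub_cancel, ← Nat.sub_add_cancel hj1, Function.iterate_succ_apply',
      Nat.sub_add_cancel hj1]
    exact (hL.congr_ae ((hL.iterate hT _).integrable (hg 1 (mem_Icc.2 ⟨le_rfl, hj1.trans
      (mem_Icc.1 hj).2⟩))) (hg j hj) (ih hj (by omega))).trans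
      (hstep j (mem_Icc.2 ⟨hj1, by omega⟩))

theorem iterate_ae_eq_self_of_cycle (hL : IsPF μ T L) (hT : Measurable T)
    (hg : ∀ j ∈ Icc 1 r, Integrable (g j) μ)
    (hstep : ∀ j ∈ Icc 1 (r - 1), L (g j) =ᵐ[μ] g (j + 1)) (hlast : L (g r) =ᵐ[μ] g 1)
    {j : ℕ} (hj : j ∈ Icc 1 r) : L^[r] (g j) =ᵐ[μ] g j := by
  have hr : 1 ≤ r := (mem_Icc.1 hj).1.trans (mem_Icc.1 hj).2
  have hg1 := hg 1 (mem_Icc.2 ⟨le_rfl, hr⟩)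
  have horbit {j : ℕ} (hj : j ∈ Icc 1 r) := iterate_sub_one_ae_eq_of_cycle hL hT hg hstep hj
  have hperiod : L^[r] (g 1) =ᵐ[μ] g 1 := by
    rw [← Nat.sub_add_cancel hr, Function.iterate_succ_apply']
    exact (hL.congr_ae ((hL.iterate hT _).integrable hg1) (hg r (mem_Icc.2 ⟨hr, le_rfl⟩))
      (horbit (mem_Icc.2 ⟨hr, le_rfl⟩))).trans hlast
  calc L^[r] (g j) =ᵐ[μ] L^[r] (L^[j - 1] (g 1)) :=
        (hL.iterate hT r).congr_ae (hg j hj) ((hL.iterate hT _).integrable hg1) (horbit hj).symm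
    _ = L^[j - 1] (L^[r] (g 1)) := by
        rw [← Function.iterate_add_apply, add_comm, Function.iterate_add_apply]
    _ =ᵐ[μ] L^[j - 1] (g 1) :=
        (hL.iterate hT _).congr_ae ((hL.iterate hT r).integrable hg1) hg1 hperiod
    _ =ᵐ[μ] g j := horbit hj

theorem exists_iterate_ae_eq_of_cycle (hL : IsPF μ T L) (hT : Measurable T)
    (hg : ∀ j ∈ Icc 1 r, Integrable (g j) μ)
    (hstep : ∀ j ∈ Icc 1 (r - 1), L (g j) =ᵐ[μ] g (j + 1)) (hlast : L (g r) =ᵐ[μ] g 1)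
    {j l : ℕ} (hj : j ∈ Icc 1 r) (hl : l ∈ Icc 1 r) : ∃ n, L^[n] (g j) =ᵐ[μ] g l := by
  have hr : 1 ≤ r := (mem_Icc.1 hj).1.trans (mem_Icc.1 hj).2
  have hg1 := hg 1 (mem_Icc.2 ⟨le_rfl, hr⟩)
  have horbit {j : ℕ} (hj : j ∈ Icc 1 r) := iterate_sub_one_ae_eq_of_cycle hL hT hg hstep hj
  refine ⟨r - j + l, ?_⟩
  calc L^[r - j + l] (g j) =ᵐ[μ] L^[r - j + l] (L^[j - 1] (g 1)) :=
        (hL.iterate hT _).congr_ae (hg j hj) ((hL.iterate hT _).integrable hg1) (horbit hj).symm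
    _ = L^[l - 1] (L^[r] (g 1)) := by
        rw [← Function.iterate_add_apply, ← Function.iterate_add_apply]
        congr 1
        have := mem_Icc.1 hj; have := mem_Icc.1 hl; omega
    _ =ᵐ[μ] L^[l - 1] (g 1) :=
        (hL.iterate hT _).congr_ae ((hL.iterate hT r).integrable hg1) hg1
          (iterate_ae_eq_self_of_cycle hL hT hg hstep hlast (mem_Icc.2 ⟨le_rfl, hr⟩))
    _ =ᵐ[μ] g l := horbit hl

end Cycle

namespace AsympPeriodic

variable {s : ℕ} {r : ℕ → ℕ} {g : ℕ → ℕ → X → ℝ} {Λ : ℕ → ℕ → (X →₁[μ] ℝ) →L[ℝ] ℝ}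
  {i j : ℕ}

theorem one_le_period (hap : AsympPeriodic μ L s r g Λ) (hi : i ∈ Icc 1 s) : 1 ≤ r i :=
  hap.2.1 i hi

theorem integrable (hap : AsympPeriodic μ L s r g Λ) (hi : i ∈ Icc 1 s)
    (hj : j ∈ Icc 1 (r i)) : Integrable (g i j) μ :=
  (hap.2.2.1 i hi j hj).2.1

theorem nonneg (hap : AsympPeriodic μ L s r g Λ) (hi : i ∈ Icc 1 s)
    (hj : j ∈ Icc 1 (r i)) : 0 ≤ᵐ[μ] g i j :=
  (hap.2.2.1 i hi j hj).2.2.1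

theorem integral_eq_one (hap : AsympPeriodic μ L s r g Λ) (hi : i ∈ Icc 1 s)
    (hj : j ∈ Icc 1 (r i)) : ∫ x, g i j x ∂μ = 1 :=
  (hap.2.2.1 i hi j hj).2.2.2

theorem ae_forall_nonneg (hap : AsympPeriodic μ L s r g Λ) :
    ∀ᵐ x ∂μ, ∀ i ∈ Icc 1 s, ∀ j ∈ Icc 1 (r i), 0 ≤ g i j x :=
  (eventually_all_finset _).2 fun _ hi => (eventually_all_finset _).2 fun _ hj => hap.nonneg hi hj

theorem ae_mul_eq_zero (hap : AsympPeriodic μ L s r g Λ) (hi : i ∈ Icc 1 s)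
    (hj : j ∈ Icc 1 (r i)) :
    ∀ᵐ x ∂μ, ∀ k ∈ Icc 1 s, ∀ l ∈ Icc 1 (r k), (k, l) ≠ (i, j) → g i j x * g k l x = 0 := by
  refine (eventually_all_finset _).2 fun k hk => (eventually_all_finset _).2 fun l hl => ?_
  by_cases hkl : (k, l) = (i, j)
  · exact Eventually.of_forall fun _ hne => absurd hkl hne
  · exact (hap.2.2.2.1 i hi j hj k hk l hl (Ne.symm hkl)).mono fun _ hx _ => hx

theorem iterate_ae_eq_self (hap : AsympPeriodic μ L s r g Λ) (hL : IsPF μ T L)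
    (hT : Measurable T) (hi : i ∈ Icc 1 s) (hj : j ∈ Icc 1 (r i)) :
    L^[r i] (g i j) =ᵐ[μ] g i j :=
  iterate_ae_eq_self_of_cycle hL hT (fun _ hj => hap.integrable hi hj) (hap.2.2.2.2.1 i hi).1
    (hap.2.2.2.2.1 i hi).2 hj

theorem exists_iterate_ae_eq (hap : AsympPeriodic μ L s r g Λ) (hL : IsPF μ T L)
    (hT : Measurable T) (hi : i ∈ Icc 1 s) (hj : j ∈ Icc 1 (r i)) {l : ℕ}
    (hl : l ∈ Icc 1 (r i)) : ∃ n, L^[n] (g i j) =ᵐ[μ] g i l :=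
  exists_iterate_ae_eq_of_cycle hL hT (fun _ hj => hap.integrable hi hj) (hap.2.2.2.2.1 i hi).1
    (hap.2.2.2.2.1 i hi).2 hj hl

theorem tendsto_integral_abs_iterate_sub (hap : AsympPeriodic μ L s r g Λ) {f : X → ℝ}
    (hf : Integrable f μ) :
    Tendsto (fun n => ∫ x, |L^[n] (f - linComb s r g fun i j => Λ i j (hf.toL1 f)) x| ∂μ)
      atTop (𝓝 0) :=
  hap.2.2.2.2.2 f hf

theorem integrable_linComb (hap : AsympPeriodic μ L s r g Λ) (c : ℕ → ℕ → ℝ) :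
    Integrable (linComb s r g c) μ :=
  integrable_finsetSum _ fun _ hi => integrable_finsetSum _ fun _ hj =>
    (hap.integrable hi hj).const_mul _

theorem iterate_mul_ae_eq_self (hap : AsympPeriodic μ L s r g Λ) (hL : IsPF μ T L)
    (hT : Measurable T) {N : ℕ} (hrN : ∀ i ∈ Icc 1 s, r i ∣ N) (hi : i ∈ Icc 1 s)
    (hj : j ∈ Icc 1 (r i)) (k : ℕ) : L^[N * k] (g i j) =ᵐ[μ] g i j := by
  obtain ⟨q, hq⟩ := hrN i hi
  rw [hq, mul_assoc]
  exact hL.iterate_mul_ae_eq_self hT (hap.integrable hi hj) (hap.iterate_ae_eq_self hL hT hi hj) _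

theorem iterate_mul_linComb_ae_eq_self (hap : AsympPeriodic μ L s r g Λ) (hL : IsPF μ T L)
    (hT : Measurable T) {N : ℕ} (hrN : ∀ i ∈ Icc 1 s, r i ∣ N) (c : ℕ → ℕ → ℝ) (k : ℕ) :
    L^[N * k] (linComb s r g c) =ᵐ[μ] linComb s r g c :=
  have hP := hL.iterate hT (N * k)
  hP.sum_ae_eq_self (F := fun i x => ∑ j ∈ Icc 1 (r i), c i j * g i j x)
    (fun _ hi => integrable_finsetSum _ fun _ hj => (hap.integrable hi hj).const_mul _)
    fun _ hi => hP.sum_ae_eq_self (fun _ hj => (hap.integrable hi hj).const_mul _)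
      fun _ hj => hP.const_mul_ae_eq_self (hap.integrable hi hj)
        (hap.iterate_mul_ae_eq_self hL hT hrN hi hj k) _

theorem tendsto_setIntegral_iterate_mul (hap : AsympPeriodic μ L s r g Λ) (hL : IsPF μ T L)
    (hT : Measurable T) {N : ℕ} (hN : 0 < N) (hrN : ∀ i ∈ Icc 1 s, r i ∣ N) {f : X → ℝ}
    (hf : Integrable f μ) (B : Set X) :
    Tendsto (fun k => ∫ x in B, L^[N * k] f x ∂μ) atTop
      (𝓝 (∫ x in B, linComb s r g (fun i j => Λ i j (hf.toL1 f)) x ∂μ)) := by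
  set h := linComb s r g fun i j => Λ i j (hf.toL1 f)
  have hh : Integrable h μ := hap.integrable_linComb _
  refine tendsto_setIntegral_of_tendsto_integral_abs_sub hh
    (fun k => (hL.iterate hT _).integrable hf) ?_ B
  refine ((hap.tendsto_integral_abs_iterate_sub hf).comp (tendsto_atTop_mono
    (fun k => Nat.le_mul_of_pos_left k hN) tendsto_id)).congr fun k => integral_congr_ae ?_
  filter_upwards [(hL.iterate hT (N * k)).sub hf hh,
    hap.iterate_mul_linComb_ae_eq_self hL hT hrN (fun i j => Λ i j (hf.toL1 f)) k] with x h1 h2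
  change |L^[N * k] (f - h) x| = _
  rw [h1, Pi.sub_apply, h2]

theorem linComb_ae_eq_of_setIntegral_eq_zero (hap : AsympPeriodic μ L s r g Λ)
    (hi : i ∈ Icc 1 s) (hj : j ∈ Icc 1 (r i)) {c : ℕ → ℕ → ℝ}
    (hc0 : 0 ≤ᵐ[μ] linComb s r g c)
    (hoff : ∫ x in {x | 0 < g i j x}ᶜ, linComb s r g c x ∂μ = 0) :
    linComb s r g c =ᵐ[μ] fun x => c i j * g i j x := by
  filter_upwards [ae_imp_eq_zero_of_setIntegral_eq_zero (hap.integrable_linComb c) hc0 hoff,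
    hap.ae_mul_eq_zero hi hj, hap.nonneg hi hj] with x hx hxdisj hx0
  by_cases hpos : 0 < g i j x
  · have hother : ∀ k ∈ Icc 1 s, ∀ l ∈ Icc 1 (r k), (k, l) ≠ (i, j) → c k l * g k l x = 0 :=
      fun k hk l hl hne => by
        rw [(mul_eq_zero.1 (hxdisj k hk l hl hne)).resolve_left hpos.ne', mul_zero]
    rw [linComb, sum_eq_single_of_mem i hi, sum_eq_single_of_mem j hj]
    · exact fun l hl hne => hother i hi l hl (by simp [hne])
    · exact fun k hk hne => sum_eq_zero fun l hl => hother k hk l hl (by simp [hne])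
  · rw [hx hpos, le_antisymm (not_lt.1 hpos) hx0, mul_zero]

theorem exists_common_period (hap : AsympPeriodic μ L s r g Λ) :
    ∃ N, 0 < N ∧ ∀ i ∈ Icc 1 s, r i ∣ N :=
  ⟨∏ i ∈ Icc 1 s, r i, one_le_prod' fun _ hi => hap.one_le_period hi,
    fun _ hi => dvd_prod_of_mem r hi⟩

theorem ae_linComb_nonneg (hap : AsympPeriodic μ L s r g Λ) (hL : IsPF μ T L)
    (hT : Measurable T) {f : X → ℝ} (hf : Integrable f μ) (hf0 : 0 ≤ᵐ[μ] f) :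
    0 ≤ᵐ[μ] linComb s r g fun i j => Λ i j (hf.toL1 f) := by
  obtain ⟨N, hN, hrN⟩ := hap.exists_common_period
  exact ae_nonneg_of_forall_setIntegral_nonneg (hap.integrable_linComb _) fun B _ _ =>
    ge_of_tendsto (hap.tendsto_setIntegral_iterate_mul hL hT hN hrN hf B)
      (Eventually.of_forall fun _ => setIntegral_nonneg_of_ae ((hL.iterate hT _).nonneg hf hf0))

theorem integral_linComb_eq (hap : AsympPeriodic μ L s r g Λ) (hL : IsPF μ T L)
    (hT : Measurable T) {f : X → ℝ} (hf : Integrable f μ) :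
    ∫ x, linComb s r g (fun i j => Λ i j (hf.toL1 f)) x ∂μ = ∫ x, f x ∂μ := by
  obtain ⟨N, hN, hrN⟩ := hap.exists_common_period
  have hlim := hap.tendsto_setIntegral_iterate_mul hL hT hN hrN hf .univ
  simp only [setIntegral_univ, (hL.iterate hT _).integral_eq hf] at hlim
  exact tendsto_nhds_unique hlim tendsto_const_nhds

theorem setIntegral_compl_linComb_eq_zero (hap : AsympPeriodic μ L s r g Λ) (hL : IsPF μ T L)
    (hT : Measurable T) {A : Set X} (hA : MeasurableSet A) (hAT : A ⊆ T ⁻¹' A) {f : X → ℝ}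
    (hf : Integrable f μ) (hf0 : 0 ≤ᵐ[μ] f) (hfA : ∫ x in Aᶜ, f x ∂μ = 0) :
    ∫ x in Aᶜ, linComb s r g (fun i j => Λ i j (hf.toL1 f)) x ∂μ = 0 := by
  obtain ⟨N, hN, hrN⟩ := hap.exists_common_period
  exact tendsto_nhds_unique (hap.tendsto_setIntegral_iterate_mul hL hT hN hrN hf Aᶜ)
    (tendsto_const_nhds.congr fun k => ((hL.iterate hT (N * k)).setIntegral_compl_eq_zero hA
      (Set.MapsTo.iterate hAT _) hf hf0 hfA).symm)

theorem setIntegral_compl_eq_zero_of_setIntegral_pos (hap : AsympPeriodic μ L s r g Λ)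
    (hL : IsPF μ T L) (hT : Measurable T) {A : Set X} (hA : MeasurableSet A)
    (hAT : A ⊆ T ⁻¹' A) (hi : i ∈ Icc 1 s) (hj : j ∈ Icc 1 (r i))
    (hpos : 0 < ∫ x in A, g i j x ∂μ) : ∫ x in Aᶜ, g i j x ∂μ = 0 := by
  obtain ⟨N, hN, hrN⟩ := hap.exists_common_period
  have hg := hap.integrable hi hj
  have hg0 := hap.nonneg hi hj
  have hf : Integrable (A.indicator (g i j)) μ := hg.indicator hA
  have hf0 : 0 ≤ᵐ[μ] A.indicator (g i j) :=
    hg0.mono fun x hx => Set.indicator_nonneg (fun _ _ => hx) x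
  have hfg : A.indicator (g i j) ≤ᵐ[μ] g i j :=
    hg0.mono fun x hx => Set.indicator_le_self' (fun _ _ => hx) x
  set c := fun k l => Λ k l (hf.toL1 (A.indicator (g i j)))
  -- `L^[N * k] (A.indicator (g i j))` is squeezed between `0` and `L^[N * k] (g i j) = g i j`.
  have hoff : ∫ x in {x | 0 < g i j x}ᶜ, linComb s r g c x ∂μ = 0 :=
    tendsto_nhds_unique (hap.tendsto_setIntegral_iterate_mul hL hT hN hrN hf _)
      (tendsto_const_nhds.congr fun k => (setIntegral_eq_zero_of_ae_eq_zero (by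
        filter_upwards [(hL.iterate hT _).nonneg hf hf0,
          (hL.iterate hT _).le_of_le_of_ae_eq_self hf hg hfg
            (hap.iterate_mul_ae_eq_self hL hT hrN hi hj k)] with x h0 hle hx
        exact le_antisymm (hle.trans (not_lt.1 hx)) h0)).symm)
  have hcomb := hap.linComb_ae_eq_of_setIntegral_eq_zero hi hj
    (hap.ae_linComb_nonneg hL hT hf hf0) hoff
  have hmass := hap.integral_linComb_eq hL hT hf
  have hcompl := hap.setIntegral_compl_linComb_eq_zero hL hT hA hAT hf hf0 (by
    rw [setIntegral_indicator hA, Set.compl_inter_self, Measure.restrict_empty,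
      integral_zero_measure])
  rw [integral_congr_ae hcomb, integral_const_mul, hap.integral_eq_one hi hj, mul_one,
    integral_indicator hA] at hmass
  rw [integral_congr_ae (ae_restrict_of_ae hcomb), integral_const_mul, hmass] at hcompl
  exact (mul_eq_zero.1 hcompl).resolve_left hpos.ne'

theorem measure_inter_eq_zero_or_measure_diff_eq_zero (hap : AsympPeriodic μ L s r g Λ)
    (hL : IsPF μ T L) (hT : Measurable T) {A : Set X} (hA : MeasurableSet A)
    (hAT : A ⊆ T ⁻¹' A) (hi : i ∈ Icc 1 s) :
    μ ({x | 0 < avgDens (r i) (g i) x} ∩ A) = 0 ∨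
      μ ({x | 0 < avgDens (r i) (g i) x} \ A) = 0 := by
  refine or_iff_not_imp_left.2 fun hne => ?_
  obtain ⟨j, hj, hpos⟩ : ∃ j ∈ Icc 1 (r i), 0 < ∫ x in A, g i j x ∂μ := by
    by_contra! hle
    exact hne (measure_avgDens_pos_inter_eq_zero (fun j hj => hap.integrable hi hj)
      (fun j hj => hap.nonneg hi hj)
      fun j hj => (hle j hj).antisymm (setIntegral_nonneg_of_ae (hap.nonneg hi hj)))
  have hcompl := hap.setIntegral_compl_eq_zero_of_setIntegral_pos hL hT hA hAT hi hj hpos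
  rw [Set.sdiff_eq]
  refine measure_avgDens_pos_inter_eq_zero (fun l hl => hap.integrable hi hl)
    (fun l hl => hap.nonneg hi hl) fun l hl => ?_
  obtain ⟨n, hn⟩ := hap.exists_iterate_ae_eq hL hT hi hj hl
  rw [← integral_congr_ae (ae_restrict_of_ae hn)]
  exact (hL.iterate hT n).setIntegral_compl_eq_zero hA (Set.MapsTo.iterate hAT n)
    (hap.integrable hi hj) (hap.nonneg hi hj) hcompl

theorem measure_inter_iUnion_pos [IsFiniteMeasure μ] (hap : AsympPeriodic μ L s r g Λ)
    (hL : IsPF μ T L) (hT : Measurable T) {A : Set X} (hA : MeasurableSet A)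
    (hApos : 0 < μ A) (hAT : A ⊆ T ⁻¹' A) :
    0 < μ (A ∩ ⋃ i ∈ Icc 1 s, {x | 0 < avgDens (r i) (g i) x}) := by
  obtain ⟨N, hN, hrN⟩ := hap.exists_common_period
  have hf : Integrable (A.indicator 1) μ := (integrable_const (1 : ℝ)).indicator hA
  have hlim := hap.tendsto_setIntegral_iterate_mul hL hT hN hrN hf A
  have hmass (k : ℕ) : ∫ x in A, L^[N * k] (A.indicator 1) x ∂μ = μ.real A := by
    have hsub : A ⊆ T^[N * k] ⁻¹' A := Set.MapsTo.iterate hAT _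
    rw [(hL.iterate hT _).setIntegral_eq hf hA, setIntegral_indicator hA,
      Set.inter_eq_right.2 hsub]
    simp
  simp only [hmass] at hlim
  by_contra hzero
  have hvanish : ∀ᵐ x ∂μ, x ∈ A →
      linComb s r g (fun i j => Λ i j (hf.toL1 (A.indicator 1))) x = 0 := by
    filter_upwards [measure_eq_zero_iff_ae_notMem.1 (le_zero_iff.1 (not_lt.1 hzero)),
      hap.ae_forall_nonneg] with x hxU hx0 hxA
    refine sum_eq_zero fun i hi => sum_eq_zero fun j hj => ?_
    rw [(hx0 i hi j hj).antisymm' (not_lt.1 fun hpos => hxU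
      ⟨hxA, Set.mem_biUnion hi (avgDens_pos (hx0 i hi) hj hpos)⟩), mul_zero]
  rw [setIntegral_eq_zero_of_ae_eq_zero hvanish] at hlim
  exact (ENNReal.toReal_pos hApos.ne' (measure_ne_top μ A)).ne'
    (tendsto_nhds_unique tendsto_const_nhds hlim)

end AsympPeriodic

end

theorem stmt_7_general {X : Type*} [MeasurableSpace X] (m : Measure X) [IsProbabilityMeasure m]
    (T : X → X) (hT : Measurable T)
    (L : (X → ℝ) → X → ℝ) (hL : IsPF m T L)
    (s : ℕ) (r : ℕ → ℕ) (g : ℕ → ℕ → X → ℝ) (Λ : ℕ → ℕ → (X →₁[m] ℝ) →L[ℝ] ℝ)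
    (hap : AsympPeriodic m L s r g Λ)
    (A : Set X) (hA : MeasurableSet A) (hApos : 0 < m A) (hAsub : A ⊆ T ⁻¹' A) :
    (∀ i ∈ Finset.Icc 1 s,
      m ({x | 0 < avgDens (r i) (g i) x} ∩ A) = 0 ∨
        m ({x | 0 < avgDens (r i) (g i) x} \ A) = 0) ∧
      0 < m (A ∩ ⋃ i ∈ Finset.Icc 1 s, {x | 0 < avgDens (r i) (g i) x}) :=
  ⟨fun _ hi => hap.measure_inter_eq_zero_or_measure_diff_eq_zero hL hT hA hAsub hi,
    hap.measure_inter_iUnion_pos hL hT hA hApos hAsub⟩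

/-- **Proposition 2.7.** If `𝓛_T` is asymptotically periodic with data
`s, r, g, Λ`, `g_i = (1/r i) ∑_j g_{i,j}`, `A_i = {g_i > 0}`, and `A` is a
measurable set with `m(A) > 0` and `A ⊆ T⁻¹(A)`, then for every `i` either
`m(A_i ∩ A) = 0` or `m(A_i \ A) = 0`, and moreover `m(A ∩ ⋃ᵢ A_i) > 0`. -/
theorem stmt_7 {X : Type*} [MeasurableSpace X] (m : Measure X) [IsProbabilityMeasure m]
    (T : X → X) (hT : Measurable T)
    (hns : ∀ A : Set X, MeasurableSet A → m A = 0 → m (T ⁻¹' A) = 0)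
    (L : (X → ℝ) → X → ℝ) (hL : IsPF m T L)
    (s : ℕ) (r : ℕ → ℕ) (g : ℕ → ℕ → X → ℝ) (Λ : ℕ → ℕ → (X →₁[m] ℝ) →L[ℝ] ℝ)
    (hap : AsympPeriodic m L s r g Λ)
    (A : Set X) (hA : MeasurableSet A) (hApos : 0 < m A) (hAsub : A ⊆ T ⁻¹' A) :
    (∀ i ∈ Finset.Icc 1 s,
      m ({x | 0 < avgDens (r i) (g i) x} ∩ A) = 0 ∨
        m ({x | 0 < avgDens (r i) (g i) x} \ A) = 0) ∧
      0 < m (A ∩ ⋃ i ∈ Finset.Icc 1 s, {x | 0 < avgDens (r i) (g i) x}) :=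
  stmt_7_general m T hT L hL s r g Λ hap A hA hApos hAsub
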